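/- arXiv:2004.12172 — 2 statements merged into one kernel-verified Lean document; each statement's English description precedes it below -/
import Mathlib

section
/- Let A be a noetherian ring complete with respect to an ideal I, and S a profinite set. Then the structural map A → C(S,A) (constant functions) is flat. -/
/-! By the equational criterion, a relation `∑ fᵢ xᵢ = 0` in `C(S, A)` must be shown trivial.
Pointwise it says that `X = (xᵢ) : S → Aⁿ` takes values in the kernel `K` of `f : Aⁿ → A`, which
is finitely generated, so it suffices to lift `X` continuously along a surjection `Aᵐ → K`.
Modulo `I ^ k` the map `X` is locally constant, and locally constant maps lift trivially.
By Artin–Rees, the difference of two successive approximations of `X` lifts with the loss of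
only a fixed number of powers of `I`, so the lifts of these differences form an `I`-adically
convergent series of locally constant maps, whose sum is the continuous lift. -/

open Filter Topology

section Algebra

variable {A : Type*} [CommRing A] {ι : Type*} [Finite ι]

theorem Ideal.mem_smul_top_pi_iff (J : Ideal A) (v : ι → A) :
    v ∈ J • (⊤ : Submodule A (ι → A)) ↔ ∀ i, v i ∈ J := by
  classical
  have := Fintype.ofFinite ι
  refine ⟨fun hv => ?_, fun hv => ?_⟩
  · refine Submodule.smul_induction_on hv (fun r hr w _ i => J.mul_mem_right _ hr) ?_
    exact fun v w hv hw i => add_mem (hv i) (hw i)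
  · rw [pi_eq_sum_univ v]
    exact Submodule.sum_mem _ fun i _ => Submodule.smul_mem_smul (hv i) trivial

instance IsHausdorff.pi (I : Ideal A) [IsHausdorff I A] : IsHausdorff I (ι → A) where
  haus' v hv := _root_.funext fun i => IsHausdorff.haus ‹_› (v i) fun n => by
    have := (I ^ n).mem_smul_top_pi_iff v |>.1 (SModEq.zero.1 (hv n)) i
    simpa [SModEq.zero] using this

theorem Ideal.exists_pow_add_smul_top_inf_range_le_map [IsNoetherianRing A] {M N : Type*}
    [AddCommGroup M] [Module A M] [AddCommGroup N] [Module A N] [Module.Finite A N]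
    (I : Ideal A) (f : M →ₗ[A] N) :
    ∃ c, ∀ k, I ^ (k + c) • ⊤ ⊓ LinearMap.range f ≤ (I ^ k • ⊤ : Submodule A M).map f := by
  obtain ⟨c, hc⟩ := I.exists_pow_inf_eq_pow_smul (LinearMap.range f)
  refine ⟨c, fun k => ?_⟩
  rw [hc _ le_add_self, Nat.add_sub_cancel, Submodule.map_smul'', Submodule.map_top]
  exact smul_mono_right _ inf_le_right

end Algebra

theorem IsLocallyConstant.exists_isLocallyConstant_forall_rel {X α β : Type*} [TopologicalSpace X]
    [Nonempty β] {q : X → α} (hq : IsLocallyConstant q) {P : α → β → Prop}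
    (h : ∀ x, ∃ b, P (q x) b) : ∃ f : X → β, IsLocallyConstant f ∧ ∀ x, P (q x) (f x) :=
  ⟨fun x => Classical.epsilon (P (q x)), hq.comp fun a => Classical.epsilon (P a),
    fun x => Classical.epsilon_spec (h x)⟩

section Adic

variable {A : Type*} [CommRing A] [TopologicalSpace A] {I : Ideal A} (hA : IsAdic I)
  {S : Type*} [TopologicalSpace S]
include hA

theorem IsAdic.eventually_sub_mem_pow {x : S → A} (hx : Continuous x) (s : S) (k : ℕ) :
    ∀ᶠ t in 𝓝 s, x t - x s ∈ I ^ k := by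
  filter_upwards [(hA.hasBasis_nhds (x s)).tendsto_right_iff.1 (hx.tendsto s) k trivial]
  rintro t ⟨y, hy, hxy⟩
  simpa [← hxy] using hy

theorem IsAdic.continuous_of_forall_exists_isLocallyConstant {g : S → A}
    (h : ∀ k, ∃ g' : S → A, IsLocallyConstant g' ∧ ∀ s, g s - g' s ∈ I ^ k) : Continuous g := by
  refine continuous_iff_continuousAt.2 fun s =>
    (hA.hasBasis_nhds (g s)).tendsto_right_iff.2 fun k _ => ?_
  obtain ⟨g', hg', hgg'⟩ := h k
  filter_upwards [hg'.eventually_eq s] with t ht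
  refine ⟨g t - g s, ?_, add_sub_cancel _ _⟩
  have hdecomp : g t - g s = (g t - g' t) - (g s - g' s) := by rw [ht]; abel
  rw [SetLike.mem_coe, hdecomp]
  exact sub_mem (hgg' t) (hgg' s)

theorem IsAdic.exists_isLocallyConstant_sub_mem_pow_smul_top {ι : Type*} [Finite ι]
    {X : S → ι → A} (hX : Continuous X) (k : ℕ) :
    ∃ F : S → ι → A, IsLocallyConstant F ∧ (∀ s, F s ∈ Set.range X) ∧
      ∀ s, F s - X s ∈ I ^ k • (⊤ : Submodule A (ι → A)) := by
  set q : S → ι → A ⧸ I ^ k := fun s i => Ideal.Quotient.mk _ (X s i)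
  have hq : IsLocallyConstant q := (IsLocallyConstant.iff_eventually_eq q).2 fun s => by
    filter_upwards [eventually_all.2 fun i =>
      hA.eventually_sub_mem_pow ((continuous_apply i).comp hX) s k] with t ht
    exact funext fun i => Ideal.Quotient.eq.2 (ht i)
  obtain ⟨F, hF, hFq⟩ := hq.exists_isLocallyConstant_forall_rel
    (P := fun a v => ∃ t, q t = a ∧ X t = v) fun s => ⟨X s, s, rfl, rfl⟩
  refine ⟨F, hF, fun s => ?_, fun s => ?_⟩ <;> obtain ⟨t, hqt, hXt⟩ := hFq s
  · exact ⟨t, hXt⟩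
  · rw [← hXt, Ideal.mem_smul_top_pi_iff]
    exact fun i => Ideal.Quotient.eq.1 (congrFun hqt i)

theorem IsAdic.exists_continuous_sub_sum_mem_pow [IsPrecomplete I A] {D : ℕ → S → A}
    (hD : ∀ n, IsLocallyConstant (D n)) (hDI : ∀ n s, D n s ∈ I ^ n) :
    ∃ g : S → A, Continuous g ∧ ∀ k s, g s - ∑ n ∈ Finset.range k, D n s ∈ I ^ k := by
  have hlim : ∀ s, ∃ L : A, ∀ k, ∑ n ∈ Finset.range k, D n s - L ∈ I ^ k := fun s => by
    obtain ⟨L, hL⟩ := IsPrecomplete.prec ‹_›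
      (f := fun k => ∑ n ∈ Finset.range k, D n s) fun {m k} hmk => by
        rw [SModEq.sub_mem, smul_eq_mul, Ideal.mul_top, ← neg_sub,
          ← Finset.sum_Ico_eq_sub _ hmk]
        exact neg_mem (sum_mem fun n hn =>
          Ideal.pow_le_pow_right (Finset.mem_Ico.1 hn).1 (hDI n s))
    refine ⟨L, fun k => ?_⟩
    rw [← Ideal.mul_top (I ^ k), ← smul_eq_mul, ← SModEq.sub_mem]
    exact hL k
  choose g hg using hlim
  refine ⟨g, hA.continuous_of_forall_exists_isLocallyConstant fun k =>
    ⟨∑ n ∈ Finset.range k, D n, ?_, fun s => ?_⟩, fun k s => ?_⟩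
  · exact Finset.sum_induction _ IsLocallyConstant (fun _ _ hf hg => hf.add hg)
      IsLocallyConstant.zero fun n _ => hD n
  all_goals simpa [Finset.sum_apply] using neg_mem (hg s k)

theorem IsAdic.exists_continuous_sub_sum_mem_pow_smul_top [IsPrecomplete I A]
    {κ : Type*} [Finite κ] {D : ℕ → S → κ → A} (hD : ∀ n, IsLocallyConstant (D n))
    (hDI : ∀ n s, D n s ∈ I ^ n • (⊤ : Submodule A (κ → A))) :
    ∃ G : S → κ → A, Continuous G ∧
      ∀ k s, G s - ∑ n ∈ Finset.range k, D n s ∈ I ^ k • (⊤ : Submodule A (κ → A)) := by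
  choose g hg hgD using fun j => hA.exists_continuous_sub_sum_mem_pow
    (D := fun n s => D n s j) (fun n => (hD n).comp (· j))
    fun n s => ((I ^ n).mem_smul_top_pi_iff _).1 (hDI n s) j
  refine ⟨fun s j => g j s, continuous_pi hg, fun k s => ?_⟩
  exact ((I ^ k).mem_smul_top_pi_iff _).2 fun j => by simpa [Finset.sum_apply] using hgD j k s

theorem IsAdic.exists_continuous_lift [ContinuousAdd A] [IsNoetherianRing A]
    [IsAdicComplete I A] {ι κ : Type*} [Finite ι] [Finite κ] (π : (κ → A) →ₗ[A] (ι → A))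
    {X : S → ι → A} (hX : Continuous X) (hXπ : ∀ s, X s ∈ LinearMap.range π) :
    ∃ G : S → κ → A, Continuous G ∧ ∀ s, π (G s) = X s := by
  obtain ⟨c, hc⟩ := I.exists_pow_add_smul_top_inf_range_le_map π
  choose F hF hFrange hFapprox using fun k =>
    hA.exists_isLocallyConstant_sub_mem_pow_smul_top hX (k + c)
  have hFπ : ∀ k s, F k s ∈ LinearMap.range π := fun k s => by
    obtain ⟨t, ht⟩ := hFrange k s
    exact ht ▸ hXπ t
  have hstep : ∀ n s, F (n + 1) s - F n s ∈ (I ^ n • ⊤ : Submodule A (κ → A)).map π :=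
    fun n s => by
      refine hc n ⟨?_, sub_mem (hFπ _ s) (hFπ n s)⟩
      rw [← sub_sub_sub_cancel_right _ _ (X s)]
      exact sub_mem (Submodule.smul_mono_left (Ideal.pow_le_pow_right (by omega))
        (hFapprox (n + 1) s)) (hFapprox n s)
  choose D hD hDlift using fun n => ((hF (n + 1)).prodMk (hF n)).exists_isLocallyConstant_forall_rel
    (P := fun p w => w ∈ (I ^ n • ⊤ : Submodule A (κ → A)) ∧ π w = p.1 - p.2) (hstep n)
  obtain ⟨D₀, hD₀, hD₀π⟩ := (hF 0).exists_isLocallyConstant_forall_rel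
    (P := fun v w => π w = v) (hFπ 0)
  obtain ⟨H, hH, hHD⟩ := hA.exists_continuous_sub_sum_mem_pow_smul_top hD fun n s => (hDlift n s).1
  refine ⟨D₀ + H, hD₀.continuous.add hH,
    fun s => (IsHausdorff.eq_iff_smodEq (I := I)).2 fun k => ?_⟩
  have hpartial : π (D₀ s + ∑ n ∈ Finset.range k, D n s) = F k s := by
    simp only [map_add, map_sum, fun n => (hDlift n s).2, Finset.sum_range_sub (F · s), hD₀π]
    abel
  have hsplit : π ((D₀ + H) s) - X s = π (H s - ∑ n ∈ Finset.range k, D n s) + (F k s - X s) := by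
    rw [← hpartial, Pi.add_apply, map_sub, map_add, map_add]
    abel
  rw [SModEq.sub_mem, hsplit]
  exact add_mem (Submodule.smul_top_le_comap_smul_top _ π (hHD k s))
    (Submodule.smul_mono_left (Ideal.pow_le_pow_right le_self_add) (hFapprox k s))

end Adic

theorem continuousMap_flat_general
    (A : Type*) [CommRing A] [IsNoetherianRing A] [TopologicalSpace A] [IsTopologicalRing A]
    (I : Ideal A) (hA : IsAdic I) [IsAdicComplete I A]
    (S : Type*) [TopologicalSpace S] :
    Module.Flat A C(S, A) := by
  refine Module.Flat.of_forall_isTrivialRelation fun {l f x} hfx => ?_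
  obtain ⟨m, b, hb⟩ := Submodule.fg_iff_exists_fin_generating_family.1
    (IsNoetherian.noetherian (LinearMap.ker (Fintype.linearCombination A f)))
  have hrange : LinearMap.range (Fintype.linearCombination A b) =
      LinearMap.ker (Fintype.linearCombination A f) := by
    rw [Fintype.range_linearCombination, hb]
  obtain ⟨G, hG, hGx⟩ := hA.exists_continuous_lift (Fintype.linearCombination A b)
    (X := fun s i => x i s) (continuous_pi fun i => (x i).continuous) fun s => by
      rw [hrange, LinearMap.mem_ker, Fintype.linearCombination_apply]
      simpa [mul_comm] using DFunLike.congr_fun hfx s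
  refine ⟨m, fun i j => b j i, fun j => ⟨fun s => G s j, (continuous_apply j).comp hG⟩,
    fun i => ?_, fun j => ?_⟩
  · ext s
    simpa [Fintype.linearCombination_apply, mul_comm] using (congrFun (hGx s) i).symm
  · have hbj : b j ∈ LinearMap.ker (Fintype.linearCombination A f) :=
      hb ▸ Submodule.subset_span ⟨j, rfl⟩
    simpa [Fintype.linearCombination_apply, mul_comm] using hbj

/-- Let `A` be a noetherian ring complete with respect to an ideal `I` (with the `I`-adic
topology), and `S` a profinite set.  Then the structural map `A → C(S,A)` (constant
functions) is flat, i.e. `C(S,A)` is a flat `A`-algebra. -/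
theorem continuousMap_flat
    (A : Type*) [CommRing A] [IsNoetherianRing A] [TopologicalSpace A] [IsTopologicalRing A]
    (I : Ideal A) (hA : IsAdic I) [IsAdicComplete I A]
    (S : Type*) [TopologicalSpace S] [CompactSpace S] [T2Space S] [TotallyDisconnectedSpace S] :
    Module.Flat A C(S, A) :=
  continuousMap_flat_general A I hA S
end

section
/- Let A be a noetherian ring complete with respect to an ideal I, S a profinite set, and f ∈ C(S,A) a continuous function such that f(s) is a non-zero-divisor in A for every s ∈ S. Suppose there exists k ≥ 0 such that I^{m+k} ∩ (f(s)) ⊆ I^m·f(s) for all m ≥ 0 and all s ∈ S. Then the principal ideal (f) ⊆ C(S,A) is closed in the I-adic topology on C(S,A). -/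
/-!
Write `g = hₘ f + qₘ` with `qₘ(s) ∈ I ^ m` for every `s`. Since `f(s)` is a non-zero-divisor,
the uniform Artin–Rees bound turns `(h_{m+k}(s) - h_{n+k}(s)) f(s) ∈ I ^ (m + k)` into
`h_{m+k}(s) - h_{n+k}(s) ∈ I ^ m`, uniformly in `s`. So `h_{n+k}` converges `I`-adically,
uniformly on `S`, to a function `H`, continuous because the `I ^ n` form a basis of
neighbourhoods of `0`; as `A` is `I`-adically separated, `g = H f`.
-/

open Ideal

section AdicRing

variable {R : Type*} [CommRing R] {I : Ideal R}

lemma IsPrecomplete.exists_forall_sub_mem_pow [IsPrecomplete I R] {u : ℕ → R}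
    (hu : ∀ {m n}, m ≤ n → u m - u n ∈ I ^ m) : ∃ L, ∀ n, u n - L ∈ I ^ n := by
  simpa only [SModEq.sub_mem, smul_eq_mul, mul_top] using
    IsPrecomplete.prec (I := I) (M := R) (f := u) inferInstance fun hmn ↦ by
      simpa only [SModEq.sub_mem, smul_eq_mul, mul_top] using hu hmn

lemma IsHausdorff.eq_of_forall_sub_mem_pow [IsHausdorff I R] {x y : R}
    (h : ∀ n, x - y ∈ I ^ n) : x = y :=
  IsHausdorff.eq_iff_smodEq (I := I).mpr fun n ↦ by
    simpa only [SModEq.sub_mem, smul_eq_mul, mul_top] using h n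

lemma Ideal.sub_mem_pow_of_artinRees {a b x y : R} {m k : ℕ} (ha : a ∈ nonZeroDivisors R)
    (hAR : I ^ (m + k) ⊓ span {a} ≤ I ^ m * span {a})
    (hx : b - x * a ∈ I ^ (m + k)) (hy : b - y * a ∈ I ^ (m + k)) : x - y ∈ I ^ m := by
  have hxy : (x - y) * a ∈ I ^ (m + k) ⊓ span {a} := by
    refine ⟨?_, mem_span_singleton'.mpr ⟨_, rfl⟩⟩
    have hdiff : (x - y) * a = (b - y * a) - (b - x * a) := by ring
    exact hdiff ▸ sub_mem hy hx
  obtain ⟨z, hz, hza⟩ := mem_mul_span_singleton.mp (hAR hxy)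
  rwa [← (mul_cancel_right_mem_nonZeroDivisors ha).mp hza]

lemma IsAdic.continuous_of_forall_exists_sub_mem_pow [TopologicalSpace R] (hI : IsAdic I)
    {X : Type*} [TopologicalSpace X] {L : X → R}
    (hL : ∀ n, ∃ φ : X → R, Continuous φ ∧ ∀ x, φ x - L x ∈ I ^ n) : Continuous L := by
  refine continuous_iff_continuousAt.mpr fun x₀ ↦ ?_
  refine (hI.hasBasis_nhds (L x₀)).tendsto_right_iff.mpr fun n _ ↦ ?_
  obtain ⟨φ, hφ, hφL⟩ := hL n
  filter_upwards [(hI.hasBasis_nhds (φ x₀)).tendsto_right_iff.mp hφ.continuousAt n trivial]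
    with x hx
  rw [Set.image_add_left, Set.mem_preimage, SetLike.mem_coe] at hx ⊢
  have hdiff : -L x₀ + L x = (-φ x₀ + φ x) + (φ x₀ - L x₀) - (φ x - L x) := by ring
  exact hdiff ▸ sub_mem (add_mem hx (hφL x₀)) (hφL x)

end AdicRing

namespace ContinuousMap

variable {X : Type*} [TopologicalSpace X] {R : Type*} [CommRing R] [TopologicalSpace R]

lemma apply_mem_of_mem_map_algebraMap [IsTopologicalSemiring R] {J : Ideal R} {q : C(X, R)}
    (hq : q ∈ J.map (algebraMap R C(X, R))) (x : X) : q x ∈ J :=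
  (map_le_iff_le_comap.mpr fun _ ha ↦ ha :
    J.map (algebraMap R C(X, R)) ≤ J.comap (evalAlgHom R R x : C(X, R) →+* R)) hq

lemma exists_forall_sub_mul_mem_of_mem_span_sup [IsTopologicalSemiring R] {J : Ideal R}
    {f g : C(X, R)} (hg : g ∈ span {f} ⊔ J.map (algebraMap R C(X, R))) :
    ∃ h : C(X, R), ∀ x, g x - h x * f x ∈ J := by
  obtain ⟨p, hp, q, hq, rfl⟩ := Submodule.mem_sup.mp hg
  obtain ⟨h, rfl⟩ := mem_span_singleton'.mp hp
  exact ⟨h, fun x ↦ by simpa using apply_mem_of_mem_map_algebraMap hq x⟩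

lemma exists_forall_sub_mem_pow_of_isAdic {I : Ideal R} (hI : IsAdic I) [IsPrecomplete I R]
    {u : ℕ → C(X, R)} (hu : ∀ {m n} x, m ≤ n → u m x - u n x ∈ I ^ m) :
    ∃ L : C(X, R), ∀ n x, u n x - L x ∈ I ^ n := by
  choose L hL using fun x ↦ IsPrecomplete.exists_forall_sub_mem_pow (hu x)
  have hLcont : Continuous L :=
    hI.continuous_of_forall_exists_sub_mem_pow fun n ↦ ⟨u n, (u n).continuous, (hL · n)⟩
  exact ⟨⟨L, hLcont⟩, fun n x ↦ hL x n⟩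

end ContinuousMap

theorem span_closed_of_uniform_artinRees_general
    (A : Type*) [CommRing A] [TopologicalSpace A] [IsTopologicalRing A]
    (I : Ideal A) (hA : IsAdic I) [IsAdicComplete I A]
    (S : Type*) [TopologicalSpace S]
    (f : C(S, A)) (hf : ∀ s, f s ∈ nonZeroDivisors A)
    (k : ℕ) (hk : ∀ (m : ℕ) (s : S),
      I ^ (m + k) ⊓ Ideal.span {f s} ≤ I ^ m * Ideal.span {f s}) :
    ∀ g : C(S, A),
      (∀ m : ℕ, g ∈ Ideal.span {f} ⊔ Ideal.map (algebraMap A C(S, A)) (I ^ m)) →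
      g ∈ Ideal.span {f} := by
  intro g hg
  choose h hh using fun m ↦ ContinuousMap.exists_forall_sub_mul_mem_of_mem_span_sup (hg m)
  have hcauchy : ∀ {m n} s, m ≤ n → h (m + k) s - h (n + k) s ∈ I ^ m := fun s hmn ↦
    sub_mem_pow_of_artinRees (hf s) (hk _ s) (hh _ s)
      (pow_le_pow_right (by omega) (hh _ s))
  obtain ⟨H, hH⟩ := ContinuousMap.exists_forall_sub_mem_pow_of_isAdic hA hcauchy
  refine mem_span_singleton'.mpr ⟨H, ContinuousMap.ext fun s ↦ ?_⟩
  refine (IsHausdorff.eq_of_forall_sub_mem_pow (I := I) fun n ↦ ?_).symm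
  have hdiff : g s - H s * f s = (g s - h (n + k) s * f s) + (h (n + k) s - H s) * f s := by
    ring
  rw [ContinuousMap.mul_apply, hdiff]
  exact add_mem (pow_le_pow_right (by omega) (hh _ s)) (mul_mem_right _ _ (hH n s))

/-- Let `A` be a noetherian ring complete with respect to an ideal `I` (with the `I`-adic
topology), `S` a profinite set, and `f ∈ C(S,A)` a continuous function such that every value
`f(s)` is a non-zero-divisor of `A`.  Suppose there is a uniform Artin–Rees constant `k`,
i.e. `I^{m+k} ∩ (f(s)) ⊆ I^m·f(s)` for all `m ≥ 0` and all `s ∈ S`.  Then the principal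
ideal `(f) ⊆ C(S,A)` is closed for the `I`-adic topology on `C(S,A)` (i.e. it equals the
intersection of the `(f) + I^m·C(S,A)`). -/
theorem span_closed_of_uniform_artinRees
    (A : Type*) [CommRing A] [IsNoetherianRing A] [TopologicalSpace A] [IsTopologicalRing A]
    (I : Ideal A) (hA : IsAdic I) [IsAdicComplete I A]
    (S : Type*) [TopologicalSpace S] [CompactSpace S] [T2Space S] [TotallyDisconnectedSpace S]
    (f : C(S, A)) (hf : ∀ s, f s ∈ nonZeroDivisors A)
    (k : ℕ) (hk : ∀ (m : ℕ) (s : S),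
      I ^ (m + k) ⊓ Ideal.span {f s} ≤ I ^ m * Ideal.span {f s}) :
    ∀ g : C(S, A),
      (∀ m : ℕ, g ∈ Ideal.span {f} ⊔ Ideal.map (algebraMap A C(S, A)) (I ^ m)) →
      g ∈ Ideal.span {f} :=
  span_closed_of_uniform_artinRees_general A I hA S f hf k hk
end
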